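/- (Bonferroni partial conjunction p-value validity) Let p_1,...,p_K ∈ [0,1] be p-values such that at least K − u + 1 of them correspond to true nulls and each true-null p-value is super-uniform (P(p_k ≤ α) ≤ α). Then the statistic p^{u/K} := (K − u + 1) · p_{(u)}, where p_{(u)} is the u-th smallest p-value, satisfies P(p^{u/K} ≤ α) ≤ α for all α ∈ [0,1], regardless of the dependence among the p-values. -/

import Mathlib

open MeasureTheory

/-- The `u`-th smallest value (1-indexed) among `pv 1 ω, …, pv K ω`. -/
noncomputable def orderStat {Ω : Type*} {K : ℕ} (pv : Fin K → Ω → ℝ) (u : ℕ) (ω : Ω) : ℝ :=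
  ((Finset.univ.val.map (fun k : Fin K => pv k ω)).sort (· ≤ ·)).getD (u - 1) 0

/-! If `#S = K - u + 1` then `S` must meet the `u` indices whose p-values are at most `p_(u)`,
so `p_(u)` dominates some `p_k` with `k ∈ S`. Choosing `S` among the true nulls, the event
`(K - u + 1) p_(u) ≤ α` forces some true-null `p_k ≤ α / (K - u + 1)`, and a union bound over `S`
gives probability at most `α`. -/

open Finset

theorem List.Pairwise.succ_le_countP_le_getElem {α : Type*} [LinearOrder α] {L : List α}
    (hL : L.Pairwise (· ≤ ·)) {i : ℕ} (hi : i < L.length) :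
    i + 1 ≤ L.countP (· ≤ L[i]) := by
  have hprefix : ∀ x ∈ L.take (i + 1), x ≤ L[i] := by
    intro x hx
    obtain ⟨j, hj, rfl⟩ := List.mem_iff_getElem.mp hx
    rw [List.getElem_take]
    rcases (show j ≤ i by simp at hj; omega).lt_or_eq with hji | rfl
    · exact hL.rel_get_of_lt hji
    · exact le_rfl
  refine le_trans ?_ (List.take_sublist (i + 1) L).countP_le
  rw [List.countP_eq_length.mpr (by simpa using hprefix), List.length_take]
  omega

theorem le_card_filter_le_orderStat {Ω : Type*} {K u : ℕ} (huK : u ≤ K) (pv : Fin K → Ω → ℝ)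
    (ω : Ω) : u ≤ #{k | pv k ω ≤ orderStat pv u ω} := by
  obtain _ | i := u
  · exact Nat.zero_le _
  set M := univ.val.map (fun k => pv k ω)
  set L := M.sort (· ≤ ·)
  have hi : i < L.length := by simp [L, M]; omega
  have hstat : orderStat pv (i + 1) ω = L[i] := List.getD_eq_getElem L 0 hi
  calc i + 1 ≤ L.countP (· ≤ L[i]) := (M.pairwise_sort _).succ_le_countP_le_getElem hi
    _ = #{k | pv k ω ≤ orderStat pv (i + 1) ω} := by
      rw [hstat, ← Multiset.coe_countP, Multiset.sort_eq, Multiset.countP_map,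
        Finset.card_def, Finset.filter_val]

theorem exists_mem_le_orderStat {Ω : Type*} {K u : ℕ} (huK : u ≤ K) (pv : Fin K → Ω → ℝ)
    {S : Finset (Fin K)} (hS : K < #S + u) (ω : Ω) : ∃ k ∈ S, pv k ω ≤ orderStat pv u ω := by
  have hcard : #(univ : Finset (Fin K)) < #S + #{k | pv k ω ≤ orderStat pv u ω} := by
    have := le_card_filter_le_orderStat huK pv ω
    rw [card_univ, Fintype.card_fin]
    omega
  obtain ⟨k, hk⟩ := inter_nonempty_of_card_lt_card_add_card (subset_univ S) (subset_univ _) hcard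
  rw [mem_inter, mem_filter] at hk
  exact ⟨k, hk.1, hk.2.2⟩

theorem measure_exists_le_div_card_le {Ω ι : Type*} [MeasurableSpace Ω] (μ : Measure Ω)
    (p : ι → Ω → ℝ) (S : Finset ι) (α : ℝ)
    (hS : ∀ k ∈ S, μ {ω | p k ω ≤ α / #S} ≤ ENNReal.ofReal (α / #S)) :
    μ {ω | ∃ k ∈ S, p k ω ≤ α / #S} ≤ ENNReal.ofReal α := by
  rcases S.eq_empty_or_nonempty with rfl | hne
  · simp
  calc μ {ω | ∃ k ∈ S, p k ω ≤ α / #S}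
      = μ (⋃ k ∈ S, {ω | p k ω ≤ α / #S}) := by congr 1; ext; simp
    _ ≤ ∑ k ∈ S, μ {ω | p k ω ≤ α / #S} := measure_biUnion_finset_le S _
    _ ≤ ∑ k ∈ S, ENNReal.ofReal (α / #S) := sum_le_sum hS
    _ = ENNReal.ofReal α := by
      rw [sum_const, ← ENNReal.ofReal_nsmul, nsmul_eq_mul,
        mul_div_cancel₀ _ (by exact_mod_cast hne.card_ne_zero)]

theorem bonferroni_partial_conjunction_valid_general {Ω : Type*} [MeasurableSpace Ω]
    (μ : Measure Ω) (K u : ℕ) (huK : u ≤ K)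
    (pv : Fin K → Ω → ℝ) (T : Finset (Fin K)) (hT : K - u + 1 ≤ T.card)
    (hsup : ∀ k ∈ T, ∀ α ∈ Set.Icc (0 : ℝ) 1,
      μ {ω | pv k ω ≤ α} ≤ ENNReal.ofReal α) :
    ∀ α ∈ Set.Icc (0 : ℝ) 1,
      μ {ω | ((K - u + 1 : ℕ) : ℝ) * orderStat pv u ω ≤ α} ≤ ENNReal.ofReal α := by
  intro α ⟨hα0, hα1⟩
  obtain ⟨S, hST, hS⟩ := exists_subset_card_eq hT
  have hS_pos : (0 : ℝ) < #S := by rw [hS]; positivity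
  have hlevel : α / #S ∈ Set.Icc (0 : ℝ) 1 :=
    ⟨by positivity, div_le_one_of_le₀ (hα1.trans (by rw [hS]; simp)) hS_pos.le⟩
  calc μ {ω | ((K - u + 1 : ℕ) : ℝ) * orderStat pv u ω ≤ α}
      ≤ μ {ω | ∃ k ∈ S, pv k ω ≤ α / #S} := by
        refine measure_mono fun ω hω => ?_
        obtain ⟨k, hkS, hk⟩ := exists_mem_le_orderStat huK pv (by omega : K < #S + u) ω
        rw [Set.mem_ofPred_eq, ← hS, mul_comm, ← le_div_iff₀ hS_pos] at hω
        exact ⟨k, hkS, hk.trans hω⟩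
    _ ≤ ENNReal.ofReal α :=
      measure_exists_le_div_card_le μ pv S α fun k hk => hsup k (hST hk) _ hlevel

/-- Bonferroni partial conjunction p-value validity: if at least `K − u + 1`
of the p-values come from true nulls, each super-uniform, then
`(K − u + 1)·p_{(u)}` is a valid p-value, under arbitrary dependence. -/
theorem bonferroni_partial_conjunction_valid {Ω : Type*} [MeasurableSpace Ω]
    (μ : Measure Ω) [IsProbabilityMeasure μ] (K u : ℕ) (hu1 : 1 ≤ u) (huK : u ≤ K)
    (pv : Fin K → Ω → ℝ) (T : Finset (Fin K)) (hT : K - u + 1 ≤ T.card)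
    (hrange : ∀ k ω, pv k ω ∈ Set.Icc (0 : ℝ) 1)
    (hsup : ∀ k ∈ T, ∀ α ∈ Set.Icc (0 : ℝ) 1,
      μ {ω | pv k ω ≤ α} ≤ ENNReal.ofReal α) :
    ∀ α ∈ Set.Icc (0 : ℝ) 1,
      μ {ω | ((K - u + 1 : ℕ) : ℝ) * orderStat pv u ω ≤ α} ≤ ENNReal.ofReal α :=
  bonferroni_partial_conjunction_valid_general μ K u huK pv T hT hsup
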